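/- With the conformally separable metric setup, the leaf projector P, and the tensors M, E, W below, for every z = (x,y) ∈ ℝ^p × ℝ^q one has E (inr A) (z) = −(∂_{inr A} (fun w => det (Matrix.of fun α β => Ξ₁ w * G (w.1) α β)))(z) / det (Matrix.of fun α β => Ξ₁ z * G x α β), and W (inl α) (z) = −(∂_{inl α} (fun w => det (Matrix.of fun A B => Ξ₂ w * H (w.2) A B)))(z) / det (Matrix.of fun A B => Ξ₂ z * H y A B). (These are the formulas E_A = −∂_A log|det(Ξ₁ G_{αβ})| and W_α = −∂_α log|det(Ξ₂ G_{AB})| of equation (27), stated as logarithmic derivatives of the determinants.) -/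

import Mathlib

/-!
In adapted coordinates the metric `g`, the projector `P` and `Π = g - P` are block diagonal, so
contracting `M` with `g⁻¹ P g⁻¹` (resp. `g⁻¹ Π g⁻¹`) only sees the leaf (resp. transverse) block.
Since the rows of `P` indexed by transverse directions vanish identically, `M_{Aβγ}` collapses to
`-∂_A (Ξ₁ G)_{βγ}`, while `M_{αBC}` is `-2` times the lowered Christoffel symbol
`Γ_{αBC} = -½ ∂_α (Ξ₂ H)_{BC}`. Jacobi's formula `∂ det B / det B = tr (B⁻¹ ∂B)` turns both
contractions into logarithmic derivatives of determinants.
-/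

open Sum

/-- Directional derivative along the `a`-th standard basis vector of `ℝ^p × ℝ^q`. -/
noncomputable def pder {p q : ℕ} (a : Fin p ⊕ Fin q)
    (f : ((Fin p → ℝ) × (Fin q → ℝ)) → ℝ) (z : (Fin p → ℝ) × (Fin q → ℝ)) : ℝ :=
  fderiv ℝ f z (Sum.elim (fun α => (Pi.single α 1, 0)) (fun A => (0, Pi.single A 1)) a)

open Finset Matrix

section Jacobi

variable {𝕜 E n : Type*} [NontriviallyNormedField 𝕜] [NormedAddCommGroup E] [NormedSpace 𝕜 E]
  [Fintype n] [DecidableEq n]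

theorem fderiv_det_apply (F : E → Matrix n n 𝕜) {z : E}
    (hF : ∀ i j, DifferentiableAt 𝕜 (fun w => F w i j) z) (v : E) :
    fderiv 𝕜 (fun w => (F w).det) z v =
      ∑ i, ∑ k, (F z).adjugate i k * fderiv 𝕜 (fun w => F w k i) z v := by
  set D : n → n → 𝕜 := fun k i => fderiv 𝕜 (fun w => F w k i) z v
  have hderiv : HasFDerivAt (fun w => (F w).det)
      (∑ σ : Equiv.Perm n, (Equiv.Perm.sign σ : 𝕜) •
        ∑ i, (∏ j ∈ univ.erase i, F z (σ j) j) • fderiv 𝕜 (fun w => F w (σ i) i) z) z := by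
    simp_rw [det_apply']
    refine HasFDerivAt.fun_sum fun σ _ => ?_
    simpa using (HasFDerivAt.finsetProd fun i _ => (hF (σ i) i).hasFDerivAt).const_mul
      (Equiv.Perm.sign σ : 𝕜)
  -- the `i`-th term of the product rule is the determinant with column `i` differentiated
  have hcol : ∀ i, ∑ σ : Equiv.Perm n,
      (Equiv.Perm.sign σ : 𝕜) * ((∏ j ∈ univ.erase i, F z (σ j) j) * D (σ i) i) =
        ∑ k, (F z).adjugate i k * D k i := by
    intro i
    calc _ = ((F z).updateCol i (fun k => D k i)).det := by
          rw [det_apply']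
          refine sum_congr rfl fun σ _ => ?_
          rw [← mul_prod_erase univ _ (mem_univ i), updateCol_self, mul_comm (D (σ i) i)]
          congr 2
          exact prod_congr rfl fun j hj => (updateCol_ne (ne_of_mem_erase hj)).symm
      _ = _ := by rw [← cramer_apply, cramer_eq_adjugate_mulVec]; rfl
  rw [hderiv.fderiv]
  simp only [FunLike.coe_sum, Finset.sum_apply, FunLike.coe_smul, Pi.smul_apply, smul_eq_mul,
    mul_sum]
  rw [sum_comm]
  exact sum_congr rfl fun i _ => hcol i

theorem fderiv_det_apply_div_det_of_isSymm (F : E → Matrix n n 𝕜) {z : E}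
    (hF : ∀ i j, DifferentiableAt 𝕜 (fun w => F w i j) z) (hsymm : (F z).IsSymm) (v : E) :
    fderiv 𝕜 (fun w => (F w).det) z v / (F z).det =
      ∑ i, ∑ j, fderiv 𝕜 (fun w => F w i j) z v * (F z)⁻¹ i j := by
  have hinv : ∀ i k, (F z)⁻¹ k i = (F z).adjugate i k / (F z).det := fun i k => by
    rw [← hsymm.inv.apply, Matrix.inv_def, Ring.inverse_eq_inv', Matrix.smul_apply, smul_eq_mul,
      inv_mul_eq_div]
  rw [fderiv_det_apply F hF, sum_div, sum_comm]
  refine sum_congr rfl fun k _ => ?_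
  rw [sum_div]
  refine sum_congr rfl fun i _ => ?_
  rw [hinv]
  ring

end Jacobi

section Connection

variable {p q : ℕ}

@[simp]
theorem pder_zero (a : Fin p ⊕ Fin q) (z : (Fin p → ℝ) × (Fin q → ℝ)) :
    pder a (fun _ => 0) z = 0 := by
  simp [pder]

noncomputable def christoffel
    (g : (Fin p → ℝ) × (Fin q → ℝ) → Matrix (Fin p ⊕ Fin q) (Fin p ⊕ Fin q) ℝ)
    (a b c : Fin p ⊕ Fin q) (z : (Fin p → ℝ) × (Fin q → ℝ)) : ℝ :=
  (1 / 2) * ∑ d, (g z)⁻¹ a d *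
    (pder b (fun w => g w d c) z + pder c (fun w => g w d b) z - pder d (fun w => g w b c) z)

noncomputable def covDeriv
    (Γ : Fin p ⊕ Fin q → Fin p ⊕ Fin q → Fin p ⊕ Fin q → (Fin p → ℝ) × (Fin q → ℝ) → ℝ)
    (P : (Fin p → ℝ) × (Fin q → ℝ) → Matrix (Fin p ⊕ Fin q) (Fin p ⊕ Fin q) ℝ)
    (a b c : Fin p ⊕ Fin q) (z : (Fin p → ℝ) × (Fin q → ℝ)) : ℝ :=
  pder a (fun w => P w b c) z - (∑ r, Γ r a b z * P z r c) - ∑ r, Γ r a c z * P z b r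

def koszulSum {ι X : Type*} (T : ι → ι → ι → X → ℝ) (a b c : ι) (z : X) : ℝ :=
  T b a c z + T c a b z - T a b c z

variable {g P : (Fin p → ℝ) × (Fin q → ℝ) → Matrix (Fin p ⊕ Fin q) (Fin p ⊕ Fin q) ℝ}
  {Γ : Fin p ⊕ Fin q → Fin p ⊕ Fin q → Fin p ⊕ Fin q → (Fin p → ℝ) × (Fin q → ℝ) → ℝ}
  {z : (Fin p → ℝ) × (Fin q → ℝ)}

theorem christoffel_comm (hg : ∀ w, (g w).IsSymm) (a b c : Fin p ⊕ Fin q) :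
    christoffel g a b c z = christoffel g a c b z := by
  have hbc : (fun w => g w b c) = fun w => g w c b := funext fun w => (hg w).apply c b
  simp only [christoffel, hbc, add_comm (pder b _ z)]

theorem sum_mul_christoffel (hg : IsUnit (g z).det) (a b c : Fin p ⊕ Fin q) :
    ∑ r, g z a r * christoffel g r b c z =
      (1 / 2) * (pder b (fun w => g w a c) z + pder c (fun w => g w a b) z -
        pder a (fun w => g w b c) z) := by
  have hinv : ∀ d, ∑ r, g z a r * (g z)⁻¹ r d = if a = d then 1 else 0 := fun d => by
    rw [← mul_apply, mul_nonsing_inv _ hg, one_apply]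
  calc ∑ r, g z a r * christoffel g r b c z
      = (1 / 2) * ∑ d, (∑ r, g z a r * (g z)⁻¹ r d) * (pder b (fun w => g w d c) z
          + pder c (fun w => g w d b) z - pder d (fun w => g w b c) z) := by
        simp only [christoffel, mul_sum, sum_mul]
        rw [sum_comm]
        exact sum_congr rfl fun _ _ => sum_congr rfl fun _ _ => by ring
    _ = _ := by simp only [hinv, ite_mul, one_mul, zero_mul, sum_ite_eq, mem_univ, if_true]

theorem koszulSum_covDeriv_of_row_eq_zero (hΓ : ∀ r b c, Γ r b c z = Γ r c b z)
    (hP : (P z).IsSymm) {a : Fin p ⊕ Fin q} (ha : ∀ w c, P w a c = 0) (b c : Fin p ⊕ Fin q) :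
    koszulSum (covDeriv Γ P) a b c z = -pder a (fun w => P w b c) z := by
  simp only [koszulSum, covDeriv, ha, pder_zero, mul_zero, sum_const_zero,
    hΓ _ a, hP.apply b, hP.apply c]
  ring

theorem koszulSum_covDeriv_of_rows_eq_zero (hΓ : ∀ r b c, Γ r b c z = Γ r c b z)
    (hP : ∀ w, (P w).IsSymm) {b c : Fin p ⊕ Fin q} (hb : ∀ w d, P w b d = 0)
    (hc : ∀ w d, P w c d = 0) (a : Fin p ⊕ Fin q) :
    koszulSum (covDeriv Γ P) a b c z = -2 * ∑ r, P z a r * Γ r b c z := by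
  have hcol : ∀ w d, P w d b = 0 ∧ P w d c = 0 := fun w d =>
    ⟨(hP w).apply b d ▸ hb w d, (hP w).apply c d ▸ hc w d⟩
  simp only [koszulSum, covDeriv, hb, hcol, pder_zero,
    mul_zero, sum_const_zero, hΓ _ c b, mul_comm (Γ _ b c z)]
  ring

theorem koszulSum_covDeriv_christoffel_of_rows_eq_zero (hg : ∀ w, (g w).IsSymm)
    (hdet : IsUnit (g z).det) (hP : ∀ w, (P w).IsSymm) {a b c : Fin p ⊕ Fin q}
    (hb : ∀ w d, P w b d = 0) (hc : ∀ w d, P w c d = 0) (hPa : ∀ r, P z a r = g z a r)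
    (hab : ∀ w, g w a b = 0) (hac : ∀ w, g w a c = 0) :
    koszulSum (covDeriv (christoffel g) P) a b c z = pder a (fun w => g w b c) z := by
  rw [koszulSum_covDeriv_of_rows_eq_zero (christoffel_comm hg) hP hb hc]
  simp only [hPa, sum_mul_christoffel hdet, hab, hac, pder_zero]
  ring

theorem pder_det_div_det_of_isSymm {n : Type*} [Fintype n] [DecidableEq n]
    (F : (Fin p → ℝ) × (Fin q → ℝ) → Matrix n n ℝ)
    (hF : ∀ i j, DifferentiableAt ℝ (fun w => F w i j) z) (hsymm : (F z).IsSymm)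
    (a : Fin p ⊕ Fin q) :
    pder a (fun w => (F w).det) z / (F z).det =
      ∑ i, ∑ j, pder a (fun w => F w i j) z * (F z)⁻¹ i j :=
  fderiv_det_apply_div_det_of_isSymm F hF hsymm _

end Connection

section BlockDiagonal

variable {m n R : Type*} [Fintype m] [Fintype n] [DecidableEq m] [DecidableEq n] [CommRing R]
  {A : Matrix m m R} {D : Matrix n n R}

theorem inv_fromBlocks_zero_zero (hA : IsUnit A.det) (hD : IsUnit D.det) :
    (fromBlocks A 0 0 D)⁻¹ = fromBlocks A⁻¹ 0 0 D⁻¹ := by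
  rw [inv_fromBlocks_zero₁₂_of_isUnit_iff _ _ _ (by simp [isUnit_iff_isUnit_det, hA, hD])]
  simp

theorem inv_mul_fromBlocks₁₁_mul_inv (hA : IsUnit A.det) (hD : IsUnit D.det) :
    (fromBlocks A 0 0 D)⁻¹ * fromBlocks A 0 0 0 * (fromBlocks A 0 0 D)⁻¹ =
      fromBlocks A⁻¹ 0 0 0 := by
  rw [inv_fromBlocks_zero_zero hA hD, fromBlocks_multiply, fromBlocks_multiply]
  simp [nonsing_inv_mul _ hA]

theorem inv_mul_fromBlocks₂₂_mul_inv (hA : IsUnit A.det) (hD : IsUnit D.det) :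
    (fromBlocks A 0 0 D)⁻¹ * fromBlocks 0 0 0 D * (fromBlocks A 0 0 D)⁻¹ =
      fromBlocks 0 0 0 D⁻¹ := by
  rw [inv_fromBlocks_zero_zero hA hD, fromBlocks_multiply, fromBlocks_multiply]
  simp [nonsing_inv_mul _ hD]

end BlockDiagonal

section BlockMetric

variable {p q : ℕ} {g P : (Fin p → ℝ) × (Fin q → ℝ) → Matrix (Fin p ⊕ Fin q) (Fin p ⊕ Fin q) ℝ}
  {B₁ : (Fin p → ℝ) × (Fin q → ℝ) → Matrix (Fin p) (Fin p) ℝ}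
  {B₂ : (Fin p → ℝ) × (Fin q → ℝ) → Matrix (Fin q) (Fin q) ℝ} {z : (Fin p → ℝ) × (Fin q → ℝ)}

theorem sum_koszulSum_covDeriv_mul_leaf (hg : ∀ w, g w = fromBlocks (B₁ w) 0 0 (B₂ w))
    (hP : ∀ w, P w = fromBlocks (B₁ w) 0 0 0) (hB₁ : ∀ w, (B₁ w).IsSymm)
    (hB₂ : ∀ w, (B₂ w).IsSymm) (hdet₁ : IsUnit (B₁ z).det) (hdet₂ : IsUnit (B₂ z).det)
    (hdiff₁ : ∀ i j, DifferentiableAt ℝ (fun w => B₁ w i j) z) (A : Fin q) :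
    ∑ b, ∑ c, koszulSum (covDeriv (christoffel g) P) (inr A) b c z *
        ((g z)⁻¹ * P z * (g z)⁻¹) b c =
      -pder (inr A) (fun w => (B₁ w).det) z / (B₁ z).det := by
  have hgsymm : ∀ w, (g w).IsSymm := fun w => hg w ▸ (hB₁ w).fromBlocks (by simp) (hB₂ w)
  have hPsymm : (P z).IsSymm := hP z ▸ (hB₁ z).fromBlocks (by simp) isSymm_zero
  have hrow : ∀ w c, P w (inr A) c = 0 := fun w c => by cases c <;> simp [hP]
  rw [neg_div, pder_det_div_det_of_isSymm B₁ hdiff₁ (hB₁ z), ← sum_neg_distrib]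
  simp only [koszulSum_covDeriv_of_row_eq_zero (christoffel_comm hgsymm) hPsymm hrow, hg z,
    hP z, inv_mul_fromBlocks₁₁_mul_inv hdet₁ hdet₂]
  simp [Fintype.sum_sum_type, hP]

theorem sum_koszulSum_covDeriv_mul_transverse (hg : ∀ w, g w = fromBlocks (B₁ w) 0 0 (B₂ w))
    (hP : ∀ w, P w = fromBlocks (B₁ w) 0 0 0) (hB₁ : ∀ w, (B₁ w).IsSymm)
    (hB₂ : ∀ w, (B₂ w).IsSymm) (hdet₁ : IsUnit (B₁ z).det) (hdet₂ : IsUnit (B₂ z).det)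
    (hdiff₂ : ∀ i j, DifferentiableAt ℝ (fun w => B₂ w i j) z) (α : Fin p) :
    ∑ b, ∑ c, koszulSum (covDeriv (christoffel g) P) (inl α) b c z *
        ((g z)⁻¹ * (g z - P z) * (g z)⁻¹) b c =
      pder (inl α) (fun w => (B₂ w).det) z / (B₂ z).det := by
  have hgsymm : ∀ w, (g w).IsSymm := fun w => hg w ▸ (hB₁ w).fromBlocks (by simp) (hB₂ w)
  have hPsymm : ∀ w, (P w).IsSymm := fun w => hP w ▸ (hB₁ w).fromBlocks (by simp) isSymm_zero
  have hgdet : IsUnit (g z).det := by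
    rw [hg z, det_fromBlocks_zero₂₁]
    exact hdet₁.mul hdet₂
  have hrow : ∀ w (B : Fin q) c, P w (inr B) c = 0 := fun w B c => by cases c <;> simp [hP]
  have hPα : ∀ r, P z (inl α) r = g z (inl α) r := fun r => by cases r <;> simp [hP, hg]
  have hgαB : ∀ w (B : Fin q), g w (inl α) (inr B) = 0 := fun w B => by simp [hg]
  have hgPg : (g z)⁻¹ * (g z - P z) * (g z)⁻¹ = fromBlocks 0 0 0 (B₂ z)⁻¹ := by
    have hsub : g z - P z = fromBlocks 0 0 0 (B₂ z) := by
      ext (_ | _) (_ | _) <;> simp [hg, hP]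
    rw [hsub, hg z]
    exact inv_mul_fromBlocks₂₂_mul_inv hdet₁ hdet₂
  rw [pder_det_div_det_of_isSymm B₂ hdiff₂ (hB₂ z), hgPg]
  simp only [Fintype.sum_sum_type, fromBlocks_apply₁₁, fromBlocks_apply₁₂, fromBlocks_apply₂₁,
    fromBlocks_apply₂₂, Matrix.zero_apply, mul_zero, sum_const_zero, zero_add,
    koszulSum_covDeriv_christoffel_of_rows_eq_zero hgsymm hgdet hPsymm (hrow · _) (hrow · _) hPα
      (hgαB · _) (hgαB · _)]
  simp [hg]

end BlockMetric

theorem E_W_components_conformally_separable_general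
    {p q : ℕ}
    (Ξ₁ Ξ₂ : ((Fin p → ℝ) × (Fin q → ℝ)) → ℝ)
    (hΞ₁ : ContDiff ℝ 2 Ξ₁) (hΞ₂ : ContDiff ℝ 2 Ξ₂)
    (hΞ₁0 : ∀ z, Ξ₁ z ≠ 0) (hΞ₂0 : ∀ z, Ξ₂ z ≠ 0)
    (G : (Fin p → ℝ) → Matrix (Fin p) (Fin p) ℝ)
    (H : (Fin q → ℝ) → Matrix (Fin q) (Fin q) ℝ)
    (hG : ∀ α β, ContDiff ℝ 2 (fun x => G x α β))
    (hH : ∀ A B, ContDiff ℝ 2 (fun y => H y A B))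
    (hGsym : ∀ x, (G x).IsSymm) (hGinv : ∀ x, IsUnit (G x).det)
    (hHsym : ∀ y, (H y).IsSymm) (hHinv : ∀ y, IsUnit (H y).det)
    (g : ((Fin p → ℝ) × (Fin q → ℝ)) → Matrix (Fin p ⊕ Fin q) (Fin p ⊕ Fin q) ℝ)
    (hg₁ : ∀ z α β, g z (inl α) (inl β) = Ξ₁ z * G z.1 α β)
    (hg₂ : ∀ z A B, g z (inr A) (inr B) = Ξ₂ z * H z.2 A B)
    (hg₃ : ∀ z α A, g z (inl α) (inr A) = 0)
    (hg₄ : ∀ z A α, g z (inr A) (inl α) = 0)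
    (Γ : (Fin p ⊕ Fin q) → (Fin p ⊕ Fin q) → (Fin p ⊕ Fin q) →
      ((Fin p → ℝ) × (Fin q → ℝ)) → ℝ)
    (hΓ : ∀ a b c z, Γ a b c z = (1 / 2) * ∑ d, (g z)⁻¹ a d *
      (pder b (fun w => g w d c) z + pder c (fun w => g w d b) z -
        pder d (fun w => g w b c) z))
    (P Pi2 : ((Fin p → ℝ) × (Fin q → ℝ)) → Matrix (Fin p ⊕ Fin q) (Fin p ⊕ Fin q) ℝ)
    (hP₁ : ∀ z α β, P z (inl α) (inl β) = Ξ₁ z * G z.1 α β)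
    (hP₂ : ∀ z A B, P z (inr A) (inr B) = 0)
    (hP₃ : ∀ z α A, P z (inl α) (inr A) = 0)
    (hP₄ : ∀ z A α, P z (inr A) (inl α) = 0)
    (hPi2 : ∀ z, Pi2 z = g z - P z)
    (nab : (Fin p ⊕ Fin q) → (Fin p ⊕ Fin q) → (Fin p ⊕ Fin q) →
      ((Fin p → ℝ) × (Fin q → ℝ)) → ℝ)
    (hnab : ∀ a b c z, nab a b c z = pder a (fun w => P w b c) z
      - (∑ r, Γ r a b z * P z r c) - ∑ r, Γ r a c z * P z b r)
    (M : (Fin p ⊕ Fin q) → (Fin p ⊕ Fin q) → (Fin p ⊕ Fin q) →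
      ((Fin p → ℝ) × (Fin q → ℝ)) → ℝ)
    (hM : ∀ a b c z, M a b c z = nab b a c z + nab c a b z - nab a b c z)
    (E W : (Fin p ⊕ Fin q) → ((Fin p → ℝ) × (Fin q → ℝ)) → ℝ)
    (hE : ∀ a z, E a z = ∑ b, ∑ c, M a b c z * ((g z)⁻¹ * P z * (g z)⁻¹) b c)
    (hW : ∀ a z, W a z = -∑ b, ∑ c, M a b c z * ((g z)⁻¹ * Pi2 z * (g z)⁻¹) b c) :
    (∀ z (A : Fin q), E (inr A) z =
      -(pder (inr A) (fun w => (Matrix.of fun α β => Ξ₁ w * G w.1 α β).det) z)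
        / (Matrix.of fun α β => Ξ₁ z * G z.1 α β).det) ∧
    (∀ z (α : Fin p), W (inl α) z =
      -(pder (inl α) (fun w => (Matrix.of fun A B => Ξ₂ w * H w.2 A B).det) z)
        / (Matrix.of fun A B => Ξ₂ z * H z.2 A B).det) := by
  set B₁ : (Fin p → ℝ) × (Fin q → ℝ) → Matrix (Fin p) (Fin p) ℝ := fun w => Ξ₁ w • G w.1
  set B₂ : (Fin p → ℝ) × (Fin q → ℝ) → Matrix (Fin q) (Fin q) ℝ := fun w => Ξ₂ w • H w.2
  have hB₁ : ∀ w, (B₁ w).IsSymm := fun w => (hGsym w.1).smul _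
  have hB₂ : ∀ w, (B₂ w).IsSymm := fun w => (hHsym w.2).smul _
  have hdet₁ : ∀ w, IsUnit (B₁ w).det := fun w => by
    simpa [B₁, det_smul] using ((hΞ₁0 w).isUnit.pow _).mul (hGinv w.1)
  have hdet₂ : ∀ w, IsUnit (B₂ w).det := fun w => by
    simpa [B₂, det_smul] using ((hΞ₂0 w).isUnit.pow _).mul (hHinv w.2)
  have hdiff₁ : ∀ z i j, DifferentiableAt ℝ (fun w => B₁ w i j) z := fun z i j =>
    (hΞ₁.mul ((hG i j).comp contDiff_fst)).differentiable two_ne_zero z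
  have hdiff₂ : ∀ z i j, DifferentiableAt ℝ (fun w => B₂ w i j) z := fun z i j =>
    (hΞ₂.mul ((hH i j).comp contDiff_snd)).differentiable two_ne_zero z
  have hgB : ∀ w, g w = fromBlocks (B₁ w) 0 0 (B₂ w) := fun w => by
    ext (_ | _) (_ | _) <;> simp [B₁, B₂, hg₁, hg₂, hg₃, hg₄]
  have hPB : ∀ w, P w = fromBlocks (B₁ w) 0 0 0 := fun w => by
    ext (_ | _) (_ | _) <;> simp [B₁, hP₁, hP₂, hP₃, hP₄]
  obtain rfl : Γ = christoffel g := by ext; exact hΓ ..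
  obtain rfl : nab = covDeriv (christoffel g) P := by ext; exact hnab ..
  obtain rfl : M = koszulSum (covDeriv (christoffel g) P) := by ext; exact hM ..
  refine ⟨fun z A => ?_, fun z α => ?_⟩
  · rw [hE]
    exact sum_koszulSum_covDeriv_mul_leaf hgB hPB hB₁ hB₂ (hdet₁ z) (hdet₂ z) (hdiff₁ z) A
  · rw [hW, hPi2, sum_koszulSum_covDeriv_mul_transverse hgB hPB hB₁ hB₂ (hdet₁ z) (hdet₂ z)
      (hdiff₂ z) α, neg_div]
    rfl

/-- The formulas `E_A = -∂_A log|det(Ξ₁ G_{αβ})|` and `W_α = -∂_α log|det(Ξ₂ G_{AB})|`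
of equation (27), stated as logarithmic derivatives of the determinants. -/
theorem E_W_components_conformally_separable
    {p q : ℕ} (hp : 1 ≤ p) (hq : 1 ≤ q)
    (Ξ₁ Ξ₂ : ((Fin p → ℝ) × (Fin q → ℝ)) → ℝ)
    (hΞ₁ : ContDiff ℝ 2 Ξ₁) (hΞ₂ : ContDiff ℝ 2 Ξ₂)
    (hΞ₁0 : ∀ z, Ξ₁ z ≠ 0) (hΞ₂0 : ∀ z, Ξ₂ z ≠ 0)
    (G : (Fin p → ℝ) → Matrix (Fin p) (Fin p) ℝ)
    (H : (Fin q → ℝ) → Matrix (Fin q) (Fin q) ℝ)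
    (hG : ∀ α β, ContDiff ℝ 2 (fun x => G x α β))
    (hH : ∀ A B, ContDiff ℝ 2 (fun y => H y A B))
    (hGsym : ∀ x, (G x).IsSymm) (hGinv : ∀ x, IsUnit (G x).det)
    (hHsym : ∀ y, (H y).IsSymm) (hHinv : ∀ y, IsUnit (H y).det)
    (g : ((Fin p → ℝ) × (Fin q → ℝ)) → Matrix (Fin p ⊕ Fin q) (Fin p ⊕ Fin q) ℝ)
    (hg₁ : ∀ z α β, g z (inl α) (inl β) = Ξ₁ z * G z.1 α β)
    (hg₂ : ∀ z A B, g z (inr A) (inr B) = Ξ₂ z * H z.2 A B)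
    (hg₃ : ∀ z α A, g z (inl α) (inr A) = 0)
    (hg₄ : ∀ z A α, g z (inr A) (inl α) = 0)
    (Γ : (Fin p ⊕ Fin q) → (Fin p ⊕ Fin q) → (Fin p ⊕ Fin q) →
      ((Fin p → ℝ) × (Fin q → ℝ)) → ℝ)
    (hΓ : ∀ a b c z, Γ a b c z = (1 / 2) * ∑ d, (g z)⁻¹ a d *
      (pder b (fun w => g w d c) z + pder c (fun w => g w d b) z -
        pder d (fun w => g w b c) z))
    (P Pi2 : ((Fin p → ℝ) × (Fin q → ℝ)) → Matrix (Fin p ⊕ Fin q) (Fin p ⊕ Fin q) ℝ)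
    (hP₁ : ∀ z α β, P z (inl α) (inl β) = Ξ₁ z * G z.1 α β)
    (hP₂ : ∀ z A B, P z (inr A) (inr B) = 0)
    (hP₃ : ∀ z α A, P z (inl α) (inr A) = 0)
    (hP₄ : ∀ z A α, P z (inr A) (inl α) = 0)
    (hPi2 : ∀ z, Pi2 z = g z - P z)
    (nab : (Fin p ⊕ Fin q) → (Fin p ⊕ Fin q) → (Fin p ⊕ Fin q) →
      ((Fin p → ℝ) × (Fin q → ℝ)) → ℝ)
    (hnab : ∀ a b c z, nab a b c z = pder a (fun w => P w b c) z
      - (∑ r, Γ r a b z * P z r c) - ∑ r, Γ r a c z * P z b r)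
    (M : (Fin p ⊕ Fin q) → (Fin p ⊕ Fin q) → (Fin p ⊕ Fin q) →
      ((Fin p → ℝ) × (Fin q → ℝ)) → ℝ)
    (hM : ∀ a b c z, M a b c z = nab b a c z + nab c a b z - nab a b c z)
    (E W : (Fin p ⊕ Fin q) → ((Fin p → ℝ) × (Fin q → ℝ)) → ℝ)
    (hE : ∀ a z, E a z = ∑ b, ∑ c, M a b c z * ((g z)⁻¹ * P z * (g z)⁻¹) b c)
    (hW : ∀ a z, W a z = -∑ b, ∑ c, M a b c z * ((g z)⁻¹ * Pi2 z * (g z)⁻¹) b c) :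
    (∀ z (A : Fin q), E (inr A) z =
      -(pder (inr A) (fun w => (Matrix.of fun α β => Ξ₁ w * G w.1 α β).det) z)
        / (Matrix.of fun α β => Ξ₁ z * G z.1 α β).det) ∧
    (∀ z (α : Fin p), W (inl α) z =
      -(pder (inl α) (fun w => (Matrix.of fun A B => Ξ₂ w * H w.2 A B).det) z)
        / (Matrix.of fun A B => Ξ₂ z * H z.2 A B).det) :=
  E_W_components_conformally_separable_general Ξ₁ Ξ₂ hΞ₁ hΞ₂ hΞ₁0 hΞ₂0 G H hG hH hGsym hGinv hHsym
    hHinv g hg₁ hg₂ hg₃ hg₄ Γ hΓ P Pi2 hP₁ hP₂ hP₃ hP₄ hPi2 nab hnab M hM E W hE hW
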